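/- arXiv:2103.13002 — 2 statements merged into one kernel-verified Lean document; each statement's English description precedes it below -/
import Mathlib

section
/- Let β ∈ (1,2) and x, y, z > 0. Then |(y + xz)^β − y^β − β·x·z·y^{β−1}| ≤ β (xz)^β. -/
/-! With `a = x z`, convexity of `t ↦ t ^ β` bounds `(y + a) ^ β - y ^ β` between the tangent-line
increments `β a y ^ (β - 1)` and `β a (y + a) ^ (β - 1)`. Hence the Taylor remainder lies in
`[0, β a ((y + a) ^ (β - 1) - y ^ (β - 1))]`, and since `0 ≤ β - 1 ≤ 1` the power `t ↦ t ^ (β - 1)` is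
subadditive, so the remainder is at most `β a · a ^ (β - 1) = β a ^ β`. -/

open Real

namespace Real

lemma rpow_add_mul_rpow_sub_one_mul_sub_le_rpow {p u v : ℝ} (hp : 1 ≤ p) (hu : 0 ≤ u)
    (hv : 0 < v) : v ^ p + p * v ^ (p - 1) * (u - v) ≤ u ^ p := by
  have bernoulli := one_add_mul_self_le_rpow_one_add (s := u / v - 1)
    (by linarith [div_nonneg hu hv.le]) hp
  have hlhs : (1 + p * (u / v - 1)) * v ^ p = v ^ p + p * v ^ (p - 1) * (u - v) := by
    rw [rpow_sub_one hv.ne']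
    field_simp
  have hrhs : (1 + (u / v - 1)) ^ p * v ^ p = u ^ p := by
    rw [add_sub_cancel, div_rpow hu hv.le, div_mul_cancel₀ _ (rpow_pos_of_pos hv p).ne']
  rw [← hlhs, ← hrhs]
  exact mul_le_mul_of_nonneg_right bernoulli (rpow_nonneg hv.le p)

lemma rpow_add_sub_rpow_sub_mul_rpow_sub_one_mem_Icc {p y a : ℝ} (hp : 1 ≤ p) (hy : 0 < y)
    (ha : 0 ≤ a) :
    (y + a) ^ p - y ^ p - p * a * y ^ (p - 1) ∈
      Set.Icc 0 (p * a * ((y + a) ^ (p - 1) - y ^ (p - 1))) := by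
  have hya : 0 < y + a := by linarith
  have lower := rpow_add_mul_rpow_sub_one_mul_sub_le_rpow hp hya.le hy
  have upper := rpow_add_mul_rpow_sub_one_mul_sub_le_rpow hp hy.le hya
  constructor <;> nlinarith

end Real

theorem taylor_large_jump_rpow (β x y z : ℝ) (hβ1 : 1 < β) (hβ2 : β < 2)
    (hx : 0 < x) (hy : 0 < y) (hz : 0 < z) :
    |(y + x*z) ^ β - y ^ β - β * x * z * y ^ (β - 1)| ≤ β * (x*z) ^ β := by
  set a := x * z
  have ha : 0 < a := mul_pos hx hz
  obtain ⟨hnonneg, hle⟩ := rpow_add_sub_rpow_sub_mul_rpow_sub_one_mem_Icc hβ1.le hy ha.le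
  have hsubadd : (y + a) ^ (β - 1) ≤ y ^ (β - 1) + a ^ (β - 1) :=
    rpow_add_le_add_rpow hy.le ha.le (by linarith) (by linarith)
  have hpow : a ^ β = a * a ^ (β - 1) := by
    rw [rpow_sub_one ha.ne', mul_div_cancel₀ _ ha.ne']
  rw [show β * x * z = β * a by ring, abs_of_nonneg hnonneg]
  calc (y + a) ^ β - y ^ β - β * a * y ^ (β - 1)
      ≤ β * a * ((y + a) ^ (β - 1) - y ^ (β - 1)) := hle
    _ ≤ β * a * a ^ (β - 1) := by gcongr; linarith
    _ = β * a ^ β := by rw [hpow, mul_assoc]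
end

section
/- Let a > 0, k > 0, σ₁ ≥ 0, σ₂ ≥ 0, β ∈ (0,1), γ ∈ (1/2, 1], and α ∈ (1,2). Define g : (0,∞) → ℝ by g(x) = a·β·x^{β−1} − k·β·x^β − a·β·x^{−1} + k·β − (σ₁²β(1−β)/2)·x^{β−2(1−γ)} + (σ₁²β/2)·x^{−2(1−γ)} + (βσ₂²/(2(2−α)))·x^{2/α − 2} + (βσ₂/(α−1))·(x^{β + 1/α − 1} + x^{1/α − 1}). Then g is bounded above on (0,∞), i.e. there exists C > 0 with g(x) ≤ C for all x > 0. -/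
/-!
Every term with a possibly positive coefficient is a power `x ^ r` with `-1 < r < β`, so up to an
additive constant it is dominated by a small multiple of `x ^ β` for large `x` and of `x ^ (-1)`
for small `x`. Spending a fifth of the negative terms `-k β x ^ β` and `-a β x ^ (-1)` on each of
the five such terms bounds the sum; the term in `x ^ (β - 2 (1 - γ))`, whose exponent may reach `β`,
has a nonpositive coefficient.
-/

open Real Filter Topology Set

namespace Real

lemma eventually_mul_rpow_le_mul_rpow_atTop {r p : ℝ} (hrp : r < p) (c : ℝ) {ε : ℝ}
    (hε : 0 < ε) : ∀ᶠ x in atTop, c * x ^ r ≤ ε * x ^ p := by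
  have hlim : Tendsto (fun x : ℝ => c * x ^ (r - p)) atTop (𝓝 0) := by
    simpa using (tendsto_rpow_neg_atTop (sub_pos.2 hrp)).const_mul c
  filter_upwards [hlim.eventually_lt_const hε, eventually_gt_atTop 0] with x hx hx0
  calc c * x ^ r = c * x ^ (r - p) * x ^ p := by rw [mul_assoc, ← rpow_add hx0, sub_add_cancel]
    _ ≤ ε * x ^ p := mul_le_mul_of_nonneg_right hx.le (rpow_nonneg hx0.le p)

lemma eventually_mul_rpow_le_mul_rpow_nhdsGT_zero {q r : ℝ} (hqr : q < r) (c : ℝ) {ε : ℝ}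
    (hε : 0 < ε) : ∀ᶠ x in 𝓝[>] 0, c * x ^ r ≤ ε * x ^ q := by
  filter_upwards [tendsto_inv_nhdsGT_zero.eventually
      (eventually_mul_rpow_le_mul_rpow_atTop (neg_lt_neg hqr) c hε), self_mem_nhdsWithin]
    with x hx hx0
  simpa only [inv_rpow (le_of_lt hx0), rpow_neg (le_of_lt hx0), inv_inv] using hx

lemma rpow_le_max_of_mem_Icc {Y X x : ℝ} (hY : 0 < Y) (hx : x ∈ Icc Y X) (r : ℝ) :
    x ^ r ≤ max (Y ^ r) (X ^ r) := by
  rcases le_total 0 r with hr | hr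
  · exact le_max_of_le_right (rpow_le_rpow (hY.trans_le hx.1).le hx.2 hr)
  · exact le_max_of_le_left (rpow_le_rpow_of_nonpos hY hx.1 hr)

lemma exists_mul_rpow_le_add {q r p : ℝ} (hqr : q < r) (hrp : r < p) (c : ℝ) {ε : ℝ}
    (hε : 0 < ε) : ∃ D, ∀ x, 0 < x → c * x ^ r ≤ ε * x ^ p + ε * x ^ q + D := by
  obtain ⟨X, hX⟩ := eventually_atTop.1 (eventually_mul_rpow_le_mul_rpow_atTop hrp c hε)
  obtain ⟨Y, hY0 : 0 < Y, hY⟩ := mem_nhdsGT_iff_exists_Ioo_subset.1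
    (eventually_mul_rpow_le_mul_rpow_nhdsGT_zero hqr c hε)
  refine ⟨|c| * max (Y ^ r) (X ^ r), fun x hx => ?_⟩
  have hD : 0 ≤ |c| * max (Y ^ r) (X ^ r) := by positivity
  have hxp : 0 ≤ ε * x ^ p := by positivity
  have hxq : 0 ≤ ε * x ^ q := by positivity
  by_cases hxX : X ≤ x
  · linarith [hX x hxX]
  by_cases hxY : x < Y
  · have hsmall : c * x ^ r ≤ ε * x ^ q := hY ⟨hx, hxY⟩
    linarith
  have hmid : c * x ^ r ≤ |c| * max (Y ^ r) (X ^ r) :=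
    calc c * x ^ r ≤ |c| * x ^ r := mul_le_mul_of_nonneg_right (le_abs_self c) (by positivity)
      _ ≤ |c| * max (Y ^ r) (X ^ r) := mul_le_mul_of_nonneg_left
          (rpow_le_max_of_mem_Icc hY0 ⟨not_lt.1 hxY, (not_le.1 hxX).le⟩ r) (abs_nonneg c)
  linarith

end Real

theorem generator_bounded_above_general (a k σ₁ σ₂ β γ α : ℝ)
    (ha : 0 < a) (hk : 0 < k)
    (hβ0 : 0 < β) (hβ1 : β < 1) (hγ1 : 1/2 < γ) (hγ2 : γ ≤ 1)
    (hα1 : 1 < α) (hα2 : α < 2) :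
    ∃ C : ℝ, 0 < C ∧ ∀ x : ℝ, 0 < x →
      a * β * x ^ (β - 1) - k * β * x ^ β - a * β * x ^ (-1 : ℝ) + k * β
        - (σ₁^2 * β * (1 - β) / 2) * x ^ (β - 2*(1 - γ))
        + (σ₁^2 * β / 2) * x ^ (-2*(1 - γ))
        + (β * σ₂^2 / (2*(2 - α))) * x ^ (2/α - 2)
        + (β * σ₂ / (α - 1)) * (x ^ (β + 1/α - 1) + x ^ (1/α - 1)) ≤ C := by
  have hα0 : 0 < α := by linarith
  have hinv0 : 0 < 1 / α := by positivity
  have hinv1 : 1 / α < 1 := (div_lt_one hα0).2 hα1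
  have hinv_half : 1 / 2 < 1 / α := one_div_lt_one_div_of_lt hα0 hα2
  have htwo : 2 / α = 2 * (1 / α) := by ring
  obtain ⟨ε, hε, hεa, hεk⟩ : ∃ ε > 0, 5 * ε ≤ a * β ∧ 5 * ε ≤ k * β :=
    ⟨min (a * β) (k * β) / 5, by positivity, by linarith [min_le_left (a * β) (k * β)],
      by linarith [min_le_right (a * β) (k * β)]⟩
  have hbound (r : ℝ) (h₁ : -1 < r) (h₂ : r < β) (c : ℝ) :
      ∃ D, ∀ x, 0 < x → c * x ^ r ≤ ε * x ^ β + ε * x ^ (-1 : ℝ) + D :=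
    exists_mul_rpow_le_add h₁ h₂ c hε
  obtain ⟨D₁, h₁⟩ := hbound (β - 1) (by linarith) (by linarith) (a * β)
  obtain ⟨D₂, h₂⟩ := hbound (-2 * (1 - γ)) (by linarith) (by linarith) (σ₁ ^ 2 * β / 2)
  obtain ⟨D₃, h₃⟩ := hbound (2 / α - 2) (by linarith) (by linarith) (β * σ₂ ^ 2 / (2 * (2 - α)))
  obtain ⟨D₄, h₄⟩ := hbound (β + 1 / α - 1) (by linarith) (by linarith) (β * σ₂ / (α - 1))
  obtain ⟨D₅, h₅⟩ := hbound (1 / α - 1) (by linarith) (by linarith) (β * σ₂ / (α - 1))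
  refine ⟨max 1 (k * β + D₁ + D₂ + D₃ + D₄ + D₅), by positivity, fun x hx => le_max_of_le_right ?_⟩
  have hσ₁ : 0 ≤ σ₁ ^ 2 * β * (1 - β) / 2 * x ^ (β - 2 * (1 - γ)) :=
    mul_nonneg (div_nonneg (mul_nonneg (by positivity) (sub_nonneg.2 hβ1.le)) zero_le_two)
      (rpow_nonneg hx.le _)
  have hkx := mul_le_mul_of_nonneg_right hεk (rpow_nonneg hx.le β)
  have hax := mul_le_mul_of_nonneg_right hεa (rpow_nonneg hx.le (-1))
  rw [mul_add]
  linarith [h₁ x hx, h₂ x hx, h₃ x hx, h₄ x hx, h₅ x hx]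

theorem generator_bounded_above (a k σ₁ σ₂ β γ α : ℝ)
    (ha : 0 < a) (hk : 0 < k) (hσ₁ : 0 ≤ σ₁) (hσ₂ : 0 ≤ σ₂)
    (hβ0 : 0 < β) (hβ1 : β < 1) (hγ1 : 1/2 < γ) (hγ2 : γ ≤ 1)
    (hα1 : 1 < α) (hα2 : α < 2) :
    ∃ C : ℝ, 0 < C ∧ ∀ x : ℝ, 0 < x →
      a * β * x ^ (β - 1) - k * β * x ^ β - a * β * x ^ (-1 : ℝ) + k * β
        - (σ₁^2 * β * (1 - β) / 2) * x ^ (β - 2*(1 - γ))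
        + (σ₁^2 * β / 2) * x ^ (-2*(1 - γ))
        + (β * σ₂^2 / (2*(2 - α))) * x ^ (2/α - 2)
        + (β * σ₂ / (α - 1)) * (x ^ (β + 1/α - 1) + x ^ (1/α - 1)) ≤ C :=
  generator_bounded_above_general a k σ₁ σ₂ β γ α ha hk hβ0 hβ1 hγ1 hγ2 hα1 hα2
end
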